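/- arXiv:1109.4912 — 3 statements merged into one kernel-verified Lean document; each statement's English description precedes it below -/
import Mathlib

section
/- Let B be a finite-dimensional unital associative K-algebra and let A be an F-subalgebra of B. If I is a left ideal of A, then cl(I) is a left ideal of cl(A); and if I is a two-sided ideal of A, then cl(I) is a two-sided ideal of cl(A). -/
/-! Each coordinate of an affine map is a polynomial of degree at most one in the coordinates
of its argument, so pulling a polynomial relation of `T` back along an affine map sending `S`
into `T` gives a polynomial relation of `S`: affine maps are continuous for the Zariski
topology. Addition and multiplication are affine in each argument separately, and fixing the
arguments one at a time (using `cl (cl U) = cl U` for the second) shows that they carry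
`cl S × cl T` into `cl U` whenever they carry `S × T` into `U`. -/

/-- The Zariski closure of a subset `A` of a finite-dimensional `K`-vector space `B`,
with respect to the coordinates given by the fixed basis `β`. -/
def zcl {K B : Type*} [Field K] [AddCommGroup B] [Module K B] {n : ℕ}
    (β : Module.Basis (Fin n) K B) (A : Set B) : Set B :=
  {x | ∀ f : MvPolynomial (Fin n) K,
    (∀ a ∈ A, MvPolynomial.eval (fun i => β.repr a i) f = 0) →
      MvPolynomial.eval (fun i => β.repr x i) f = 0}

open MvPolynomial

section AffineMaps

variable {K E F G : Type*} [Field K] [AddCommGroup E] [Module K E] [AddCommGroup F] [Module K F]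
  [AddCommGroup G] [Module K G] {n m k : ℕ}
  (β : Module.Basis (Fin n) K E) (γ : Module.Basis (Fin m) K F) (δ : Module.Basis (Fin k) K G)

lemma subset_zcl (S : Set E) : S ⊆ zcl β S :=
  fun s hs _ hf => hf s hs

lemma zcl_zcl_subset (S : Set E) : zcl β (zcl β S) ⊆ zcl β S :=
  fun _ hx f hf => hx f fun _ ha => ha f hf

lemma zcl_mono {S T : Set E} (h : S ⊆ T) : zcl β S ⊆ zcl β T :=
  fun _ hx f hf => hx f fun a ha => hf a (h ha)

lemma exists_eval_repr_eq_repr_affineMap (φ : E →ᵃ[K] F) (i : Fin m) :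
    ∃ p : MvPolynomial (Fin n) K, ∀ y, eval (fun j => β.repr y j) p = γ.repr (φ y) i := by
  refine ⟨C (γ.repr (φ 0) i) + ∑ j, C (γ.repr (φ.linear (β j)) i) * X j, fun y => ?_⟩
  have hφ : φ y = φ.linear y + φ 0 :=
    sub_eq_iff_eq_add.mp (by simpa using (φ.linearMap_vsub y 0).symm)
  have hlin : φ.linear y = ∑ j, β.repr y j • φ.linear (β j) := by
    conv_lhs => rw [← β.sum_repr y]
    simp only [map_sum, map_smul]
  rw [hφ, hlin]
  simp [mul_comm, add_comm]

lemma mapsTo_zcl_of_affineMap (φ : E →ᵃ[K] F) {S : Set E} {T : Set F} (h : Set.MapsTo φ S T) :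
    Set.MapsTo φ (zcl β S) (zcl γ T) := by
  intro x hx f hf
  choose p hp using exists_eval_repr_eq_repr_affineMap β γ φ
  have hpull : ∀ y, eval (fun j => β.repr y j) (bind₁ p f) = eval (fun i => γ.repr (φ y) i) f := by
    intro y
    calc eval _ (bind₁ p f) = eval (fun i => eval (fun j => β.repr y j) (p i)) f :=
          eval₂Hom_bind₁ _ _ _ _
      _ = _ := by simp only [hp]
  rw [← hpull]
  exact hx _ fun s hs => by rw [hpull]; exact hf _ (h hs)

lemma mem_zcl_of_separately_affine (μ : E → F → G)
    (hleft : ∀ x, ∃ φ : F →ᵃ[K] G, ∀ y, φ y = μ x y)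
    (hright : ∀ y, ∃ φ : E →ᵃ[K] G, ∀ x, φ x = μ x y)
    {S : Set E} {T : Set F} {U : Set G} (h : ∀ x ∈ S, ∀ y ∈ T, μ x y ∈ U) :
    ∀ x ∈ zcl β S, ∀ y ∈ zcl γ T, μ x y ∈ zcl δ U := by
  have hS : ∀ x ∈ S, ∀ y ∈ zcl γ T, μ x y ∈ zcl δ U := by
    intro x hx y hy
    obtain ⟨φ, hφ⟩ := hleft x
    simpa [hφ] using
      mapsTo_zcl_of_affineMap γ δ φ (fun y' hy' => by simpa [hφ] using h x hx y' hy') hy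
  intro x hx y hy
  obtain ⟨φ, hφ⟩ := hright y
  apply zcl_zcl_subset δ U
  simpa [hφ] using
    mapsTo_zcl_of_affineMap β δ φ (fun x' hx' => by simpa [hφ] using hS x' hx' y hy) hx

lemma neg_mem_zcl {S : Set E} (h : ∀ x ∈ S, -x ∈ S) : ∀ x ∈ zcl β S, -x ∈ zcl β S :=
  fun _ hx => mapsTo_zcl_of_affineMap β β (-LinearMap.id : E →ₗ[K] E).toAffineMap h hx

lemma add_mem_zcl {S T U : Set E} (h : ∀ x ∈ S, ∀ y ∈ T, x + y ∈ U) :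
    ∀ x ∈ zcl β S, ∀ y ∈ zcl β T, x + y ∈ zcl β U :=
  mem_zcl_of_separately_affine β β β (· + ·)
    (fun x => ⟨(AffineEquiv.constVAdd K E x).toAffineMap, fun _ => rfl⟩)
    (fun y => ⟨(AffineEquiv.constVAdd K E y).toAffineMap, fun _ => add_comm _ _⟩) h

end AffineMaps

lemma mul_mem_zcl {K B : Type*} [Field K] [Ring B] [Algebra K B] {n : ℕ}
    (β : Module.Basis (Fin n) K B) {S T U : Set B} (h : ∀ x ∈ S, ∀ y ∈ T, x * y ∈ U) :
    ∀ x ∈ zcl β S, ∀ y ∈ zcl β T, x * y ∈ zcl β U :=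
  mem_zcl_of_separately_affine β β β (· * ·)
    (fun x => ⟨(LinearMap.mulLeft K x).toAffineMap, fun _ => rfl⟩)
    (fun y => ⟨(LinearMap.mulRight K y).toAffineMap, fun _ => rfl⟩) h

theorem stmt_2_general {K B : Type*} [Field K]
    [Ring B] [Algebra K B]
    {n : ℕ} (β : Module.Basis (Fin n) K B) (A I : Set B)
    (hIA : I ⊆ A) (hI0 : (0 : B) ∈ I)
    (hIadd : ∀ x ∈ I, ∀ y ∈ I, x + y ∈ I)
    (hIneg : ∀ x ∈ I, -x ∈ I) :
    ((∀ a ∈ A, ∀ x ∈ I, a * x ∈ I) →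
      (zcl β I ⊆ zcl β A ∧ (0 : B) ∈ zcl β I ∧
        (∀ x ∈ zcl β I, ∀ y ∈ zcl β I, x + y ∈ zcl β I) ∧
        (∀ x ∈ zcl β I, -x ∈ zcl β I) ∧
        (∀ a ∈ zcl β A, ∀ x ∈ zcl β I, a * x ∈ zcl β I))) ∧
    ((∀ a ∈ A, ∀ x ∈ I, a * x ∈ I ∧ x * a ∈ I) →
      (zcl β I ⊆ zcl β A ∧ (0 : B) ∈ zcl β I ∧
        (∀ x ∈ zcl β I, ∀ y ∈ zcl β I, x + y ∈ zcl β I) ∧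
        (∀ x ∈ zcl β I, -x ∈ zcl β I) ∧
        (∀ a ∈ zcl β A, ∀ x ∈ zcl β I, a * x ∈ zcl β I ∧ x * a ∈ zcl β I))) := by
  have hsub := zcl_mono β hIA
  have h0 := subset_zcl β I hI0
  have hadd := add_mem_zcl β hIadd
  have hneg := neg_mem_zcl β hIneg
  refine ⟨fun hleft => ⟨hsub, h0, hadd, hneg, mul_mem_zcl β hleft⟩, fun hideal => ?_⟩
  have hleft := mul_mem_zcl β fun a ha x hx => (hideal a ha x hx).1
  have hright := mul_mem_zcl β fun x hx a ha => (hideal a ha x hx).2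
  exact ⟨hsub, h0, hadd, hneg, fun a ha x hx => ⟨hleft a ha x hx, hright x hx a ha⟩⟩

/-- if `I` is a left ideal of the `F`-subalgebra `A` of `B`, then `cl(I)` is a
left ideal of `cl(A)`; and if `I` is a two-sided ideal of `A`, then `cl(I)` is a two-sided
ideal of `cl(A)`. -/
theorem stmt_2 {K F B : Type*} [Field K] [IsAlgClosed K] [Field F] [Algebra F K]
    [Ring B] [Algebra K B] [Algebra F B] [IsScalarTower F K B]
    {n : ℕ} (β : Module.Basis (Fin n) K B) (A I : Set B)
    (h1 : (1 : B) ∈ A)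
    (hAadd : ∀ x ∈ A, ∀ y ∈ A, x + y ∈ A)
    (hAsmul : ∀ (c : F), ∀ x ∈ A, c • x ∈ A)
    (hAmul : ∀ x ∈ A, ∀ y ∈ A, x * y ∈ A)
    (hIA : I ⊆ A) (hI0 : (0 : B) ∈ I)
    (hIadd : ∀ x ∈ I, ∀ y ∈ I, x + y ∈ I)
    (hIneg : ∀ x ∈ I, -x ∈ I) :
    ((∀ a ∈ A, ∀ x ∈ I, a * x ∈ I) →
      (zcl β I ⊆ zcl β A ∧ (0 : B) ∈ zcl β I ∧
        (∀ x ∈ zcl β I, ∀ y ∈ zcl β I, x + y ∈ zcl β I) ∧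
        (∀ x ∈ zcl β I, -x ∈ zcl β I) ∧
        (∀ a ∈ zcl β A, ∀ x ∈ zcl β I, a * x ∈ zcl β I))) ∧
    ((∀ a ∈ A, ∀ x ∈ I, a * x ∈ I ∧ x * a ∈ I) →
      (zcl β I ⊆ zcl β A ∧ (0 : B) ∈ zcl β I ∧
        (∀ x ∈ zcl β I, ∀ y ∈ zcl β I, x + y ∈ zcl β I) ∧
        (∀ x ∈ zcl β I, -x ∈ zcl β I) ∧
        (∀ a ∈ zcl β A, ∀ x ∈ zcl β I, a * x ∈ zcl β I ∧ x * a ∈ zcl β I))) :=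
  stmt_2_general β A I hIA hI0 hIadd hIneg
end

section
/- Let B and B' be finite-dimensional K-vector spaces, let ψ : B → B' be a K-linear map, and let A be an F-subspace of B. Then ψ(cl(A)) = cl(ψ(A)); in particular, the image under ψ of a Zariski-closed F-subspace of B is Zariski-closed in B'. -/
/-!
Polynomial functions on `B` are generated by linear functionals, so `zcl` is a basis-free Zariski
closure. The closure of an additive subgroup is again a subgroup and linear maps send closures
into closures, so it suffices that a linear map sends closed subgroups to closed sets. An injective
map has a linear left inverse; splitting off a line of the kernel reduces the rest to the
projection `B × K → B`.

Let `V ⊆ B × K` be a closed subgroup with projection `S`. If `V` contains the vertical line over `0`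
then `S` is a linear preimage of `V`. Otherwise take a relation `P(x, t)` of `V` of least degree `r`
in `t` whose leading coefficient `c` does not vanish on `S`. Comparing `P` with its translates by
elements of `V` shows that over every `x ∈ S` with `c x ≠ 0` the roots of `P(x, ·)` lie in a fixed
finite union of translates of `V`. Divisibility by `P` is a Zariski-closed condition where `c ≠ 0`
(pseudo-division), so every `z` in the closure of `S` with `c z ≠ 0` lies in `S`. A subgroup
containing a nonempty open subset of its closure is closed.
-/

open Polynomial

namespace Polynomial

theorem exists_C_leadingCoeff_pow_mul_eq_mul_add {R : Type*} [CommRing R] {a : R[X]} (ha : a ≠ 0)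
    (b : R[X]) : ∃ (N : ℕ) (q rem : R[X]),
      C a.leadingCoeff ^ N * b = q * a + rem ∧ rem.degree < a.degree := by
  induction b using degree_lt_wf.induction with
  | _ b ih =>
  by_cases hba : b.degree < a.degree
  · exact ⟨0, 0, b, by simp, hba⟩
  have hb : b ≠ 0 := by rintro rfl; exact hba (by simpa [bot_lt_iff_ne_bot] using ha)
  have hr : a.natDegree ≤ b.natDegree := natDegree_le_natDegree (not_lt.1 hba)
  set k := b.natDegree - a.natDegree
  set b' := C a.leadingCoeff * b - C b.leadingCoeff * X ^ k * a
  have hb' : b'.degree < b.degree := by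
    rw [degree_eq_natDegree hb, degree_lt_iff_coeff_zero]
    intro m hm
    have hcoeff : b'.coeff m = a.leadingCoeff * b.coeff m - b.leadingCoeff * a.coeff (m - k) := by
      simp [b', mul_assoc, coeff_X_pow_mul', show k ≤ m by omega]
    rcases hm.eq_or_lt with hm | hm
    · rw [hcoeff, ← hm, show b.natDegree - k = a.natDegree by omega]
      rw [coeff_natDegree, coeff_natDegree, mul_comm, sub_self]
    · rw [hcoeff, coeff_eq_zero_of_natDegree_lt hm,
        coeff_eq_zero_of_natDegree_lt (show a.natDegree < m - k by omega)]
      simp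
  obtain ⟨N, q, rem, h, hrem⟩ := ih b' hb'
  refine ⟨N + 1, q + C a.leadingCoeff ^ N * C b.leadingCoeff * X ^ k, rem, ?_, hrem⟩
  linear_combination h

theorem dvd_pow_natDegree_of_forall_isRoot {K : Type*} [Field K] [IsAlgClosed K] {p q : K[X]}
    (hp : p ≠ 0) (h : ∀ t, p.IsRoot t → q.IsRoot t) : p ∣ q ^ p.natDegree := by
  classical
  rcases eq_or_ne q 0 with rfl | hq
  · rcases Nat.eq_zero_or_pos p.natDegree with h0 | h0
    · rw [h0, pow_zero]
      exact (isUnit_iff_degree_eq_zero.2 (by rw [degree_eq_natDegree hp, h0, Nat.cast_zero])).dvd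
    · rw [zero_pow h0.ne']; exact dvd_zero _
  refine (IsAlgClosed.splits p).dvd_of_roots_le_roots hp ?_
  rw [roots_pow, Multiset.le_iff_count]
  intro t
  by_cases ht : t ∈ p.roots
  · have htq : 1 ≤ q.roots.count t :=
      Multiset.one_le_count_iff_mem.2 ((mem_roots hq).2 (h t (isRoot_of_mem_roots ht)))
    calc p.roots.count t ≤ Multiset.card p.roots := Multiset.count_le_card _ _
      _ ≤ p.natDegree := card_roots' p
      _ ≤ p.natDegree * q.roots.count t := Nat.le_mul_of_pos_right _ htq
      _ = (p.natDegree • q.roots).count t := by simp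
  · simp [Multiset.count_eq_zero.2 ht]

theorem coeff_taylor_of_natDegree_le {R : Type*} [CommSemiring R] {p : R[X]} {n : ℕ}
    (hp : p.natDegree ≤ n) (s : R) : (taylor s p).coeff n = p.coeff n := by
  rcases hp.eq_or_lt with rfl | hp
  · exact coeff_taylor_natDegree s p
  · rw [coeff_eq_zero_of_natDegree_lt hp, coeff_eq_zero_of_natDegree_lt (by rwa [natDegree_taylor])]

end Polynomial

section ZariskiClosure

variable (K : Type*) [Field K]

def polyFun (B : Type*) [AddCommGroup B] [Module K B] : Subalgebra K (B → K) :=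
  Algebra.adjoin K {f | IsLinearMap K f}

def zariskiClosure {B : Type*} [AddCommGroup B] [Module K B] (A : Set B) : Set B :=
  {x | ∀ f ∈ polyFun K B, (∀ a ∈ A, f a = 0) → f x = 0}

def IsZariskiClosed {B : Type*} [AddCommGroup B] [Module K B] (A : Set B) : Prop :=
  zariskiClosure K A ⊆ A

variable {K} {B B₂ : Type*} [AddCommGroup B] [Module K B] [AddCommGroup B₂] [Module K B₂]

section PolyFun

theorem linearMap_mem_polyFun (ℓ : B →ₗ[K] K) : ⇑ℓ ∈ polyFun K B :=
  Algebra.subset_adjoin ℓ.isLinear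

theorem const_mem_polyFun (c : K) : (fun _ : B ↦ c) ∈ polyFun K B :=
  Subalgebra.algebraMap_mem _ c

theorem comp_affine_mem_polyFun {f : B → K} (hf : f ∈ polyFun K B) (T : B₂ →ₗ[K] B) (b : B) :
    (fun x ↦ f (T x + b)) ∈ polyFun K B₂ := by
  induction hf using Algebra.adjoin_induction with
  | mem g hg =>
    let ℓ : B →ₗ[K] K := IsLinearMap.mk' g hg
    have : (fun x ↦ g (T x + b)) = ⇑(ℓ ∘ₗ T) + fun _ ↦ g b := by
      funext x; simp [ℓ, (hg : IsLinearMap K g).map_add]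
    rw [this]
    exact add_mem (linearMap_mem_polyFun _) (const_mem_polyFun _)
  | algebraMap r => exact const_mem_polyFun r
  | add _ _ _ _ h₁ h₂ => exact add_mem h₁ h₂
  | mul _ _ _ _ h₁ h₂ => exact mul_mem h₁ h₂

theorem comp_add_mem_polyFun {f : B → K} (hf : f ∈ polyFun K B) (b : B) :
    (fun x ↦ f (x + b)) ∈ polyFun K B :=
  comp_affine_mem_polyFun hf LinearMap.id b

theorem comp_linearMap_mem_polyFun {f : B → K} (hf : f ∈ polyFun K B) (T : B₂ →ₗ[K] B) :
    f ∘ T ∈ polyFun K B₂ := by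
  simpa [Function.comp_def] using comp_affine_mem_polyFun hf T 0

variable (K) in
def polyFun.evalAt (x : B) : polyFun K B →ₐ[K] K :=
  (Pi.evalAlgHom K (fun _ ↦ K) x).comp (polyFun K B).val

@[simp]
theorem polyFun.evalAt_apply (x : B) (c : polyFun K B) : evalAt K x c = (c : B → K) x := rfl

variable (K) in
def polyFun.translate (a : B) : polyFun K B →ₐ[K] polyFun K B :=
  ((AlgHom.pi fun x ↦ Pi.evalAlgHom K (fun _ ↦ K) (x + a)).comp (polyFun K B).val).codRestrict
    _ fun c ↦ comp_add_mem_polyFun c.2 a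

@[simp]
theorem polyFun.translate_apply (a x : B) (c : polyFun K B) :
    (translate K a c : B → K) x = (c : B → K) (x + a) := rfl

end PolyFun

section Closure

theorem subset_zariskiClosure (A : Set B) : A ⊆ zariskiClosure K A :=
  fun a ha _ _ hf ↦ hf a ha

theorem zariskiClosure_mono {A A' : Set B} (h : A ⊆ A') :
    zariskiClosure K A ⊆ zariskiClosure K A' :=
  fun _ hx f hf hA' ↦ hx f hf fun _ ha ↦ hA' _ (h ha)

theorem isZariskiClosed_zariskiClosure (A : Set B) : IsZariskiClosed K (zariskiClosure K A) :=
  fun _ hx f hf hA ↦ hx f hf fun _ ha ↦ ha f hf hA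

theorem exists_polyFun_of_notMem_zariskiClosure {A : Set B} {x : B} (hx : x ∉ zariskiClosure K A) :
    ∃ f ∈ polyFun K B, (∀ a ∈ A, f a = 0) ∧ f x ≠ 0 := by
  simpa [zariskiClosure] using hx

theorem zariskiClosure_preimage_affine_subset (T : B₂ →ₗ[K] B) (b : B) (A : Set B) :
    zariskiClosure K ((fun x ↦ T x + b) ⁻¹' A) ⊆ (fun x ↦ T x + b) ⁻¹' zariskiClosure K A :=
  fun _ hx _ hf hA ↦ hx _ (comp_affine_mem_polyFun hf T b) fun _ ha ↦ hA _ ha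

theorem IsZariskiClosed.preimage_affine {A : Set B} (hA : IsZariskiClosed K A)
    (T : B₂ →ₗ[K] B) (b : B) : IsZariskiClosed K ((fun x ↦ T x + b) ⁻¹' A) :=
  (zariskiClosure_preimage_affine_subset T b A).trans (Set.preimage_mono hA)

theorem image_zariskiClosure_subset (T : B →ₗ[K] B₂) (A : Set B) :
    T '' zariskiClosure K A ⊆ zariskiClosure K (T '' A) := by
  have h := zariskiClosure_preimage_affine_subset T 0 (T '' A)
  simp only [add_zero] at h
  exact Set.image_subset_iff.2 ((zariskiClosure_mono (Set.subset_preimage_image T A)).trans h)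

theorem zariskiClosure_union_subset (A₁ A₂ : Set B) :
    zariskiClosure K (A₁ ∪ A₂) ⊆ zariskiClosure K A₁ ∪ zariskiClosure K A₂ := by
  intro x hx
  by_contra! h
  simp only [Set.mem_union, not_or] at h
  obtain ⟨f₁, hf₁, hA₁, hx₁⟩ := exists_polyFun_of_notMem_zariskiClosure h.1
  obtain ⟨f₂, hf₂, hA₂, hx₂⟩ := exists_polyFun_of_notMem_zariskiClosure h.2
  refine mul_ne_zero hx₁ hx₂ (hx _ (mul_mem hf₁ hf₂) ?_)
  rintro a (ha | ha) <;> simp [hA₁ a, hA₂ a, ha]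

theorem zariskiClosure_biUnion_subset {ι : Type*} (s : Finset ι) (A : ι → Set B) :
    zariskiClosure K (⋃ i ∈ s, A i) ⊆ ⋃ i ∈ s, zariskiClosure K (A i) := by
  classical
  induction s using Finset.induction_on with
  | empty =>
    intro x hx
    simpa using hx 1 (one_mem _) (by simp)
  | insert i s _ ih =>
    simp only [Finset.set_biUnion_insert]
    exact (zariskiClosure_union_subset _ _).trans (Set.union_subset_union_right _ ih)

end Closure

section AddSubgroup

theorem add_mem_zariskiClosure {G : AddSubgroup B} {x y : B} (hx : x ∈ zariskiClosure K (G : Set B))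
    (hy : y ∈ zariskiClosure K (G : Set B)) : x + y ∈ zariskiClosure K (G : Set B) := by
  intro f hf hG
  have hxG : ∀ a ∈ G, f (x + a) = 0 := fun a ha ↦
    hx _ (comp_add_mem_polyFun hf a) fun b hb ↦ hG _ (G.add_mem hb ha)
  simpa [add_comm] using hy _ (comp_add_mem_polyFun hf x) fun a ha ↦ by
    simpa [add_comm] using hxG a ha

theorem neg_mem_zariskiClosure {G : AddSubgroup B} {x : B} (hx : x ∈ zariskiClosure K (G : Set B)) :
    -x ∈ zariskiClosure K (G : Set B) := by
  intro f hf hG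
  simpa using hx _ (comp_linearMap_mem_polyFun hf (-LinearMap.id)) fun a ha ↦ by
    simpa using hG _ (G.neg_mem ha)

variable (K) in
def _root_.AddSubgroup.zariskiClosure (G : AddSubgroup B) : AddSubgroup B where
  carrier := _root_.zariskiClosure K (G : Set B)
  zero_mem' := subset_zariskiClosure _ G.zero_mem
  add_mem' := add_mem_zariskiClosure
  neg_mem' := neg_mem_zariskiClosure

end AddSubgroup

section Linear

theorem LinearMap.eq_zero_of_mem_zariskiClosure (L : B →ₗ[K] B₂) {A : Set B}
    (hA : ∀ a ∈ A, L a = 0) {x : B} (hx : x ∈ zariskiClosure K A) : L x = 0 :=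
  (Module.forall_dual_apply_eq_zero_iff K (L x)).1 fun φ ↦
    hx _ (linearMap_mem_polyFun (φ ∘ₗ L)) fun a ha ↦ by simp [hA a ha]

theorem zariskiClosure_image_subset_of_injective {ψ : B →ₗ[K] B₂} (hψ : Function.Injective ψ)
    (A : Set B) : zariskiClosure K (ψ '' A) ⊆ ψ '' zariskiClosure K A := by
  obtain ⟨g, hg⟩ := ψ.exists_leftInverse_of_injective (LinearMap.ker_eq_bot.2 hψ)
  have hgψ : ∀ x, g (ψ x) = x := LinearMap.congr_fun hg
  intro y hy
  have hψg : ψ (g y) = y := sub_eq_zero.1 <|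
    (ψ ∘ₗ g - LinearMap.id).eq_zero_of_mem_zariskiClosure
      (by rintro _ ⟨x, -, rfl⟩; simp [hgψ]) hy
  refine ⟨g y, ?_, hψg⟩
  simpa [Set.image_image, hgψ] using image_zariskiClosure_subset g (ψ '' A) ⟨y, hy, rfl⟩

theorem IsZariskiClosed.image_of_injective {A : Set B} (hA : IsZariskiClosed K A)
    {ψ : B →ₗ[K] B₂} (hψ : Function.Injective ψ) : IsZariskiClosed K (ψ '' A) :=
  (zariskiClosure_image_subset_of_injective hψ A).trans (Set.image_mono hA)

end Linear

section Coordinates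

theorem polyFun_eq_range_aeval {ι : Type*} [Fintype ι] (β : Module.Basis ι K B) :
    polyFun K B = (MvPolynomial.aeval fun i ↦ ⇑(β.coord i)).range := by
  rw [← Algebra.adjoin_range_eq_range_aeval]
  refine le_antisymm (Algebra.adjoin_le ?_) (Algebra.adjoin_mono ?_)
  · intro g hg
    let ℓ : B →ₗ[K] K := IsLinearMap.mk' g hg
    have hsum : g = ∑ i, ℓ (β i) • ⇑(β.coord i) := funext fun x ↦ by
      change ℓ x = _
      conv_lhs => rw [← β.sum_repr x]
      simp only [map_sum, map_smul, smul_eq_mul, Finset.sum_apply, Pi.smul_apply,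
        Module.Basis.coord_apply, mul_comm]
    rw [hsum]
    exact sum_mem fun i _ ↦ Subalgebra.smul_mem _ (Algebra.subset_adjoin (Set.mem_range_self i)) _
  · rintro _ ⟨i, rfl⟩
    exact (β.coord i).isLinear

theorem aeval_coord_apply {ι : Type*} (β : Module.Basis ι K B) (F : MvPolynomial ι K) (x : B) :
    MvPolynomial.aeval (fun i ↦ ⇑(β.coord i)) F x = MvPolynomial.eval (fun i ↦ β.repr x i) F := by
  induction F using MvPolynomial.induction_on with
  | C a => simp
  | add p q hp hq => simp [hp, hq]
  | mul_X p i hp => simp [hp]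

theorem zcl_eq_zariskiClosure {n : ℕ} (β : Module.Basis (Fin n) K B) (A : Set B) :
    zcl β A = zariskiClosure K A := by
  ext x
  simp only [zcl, zariskiClosure, polyFun_eq_range_aeval β, AlgHom.mem_range,
    forall_exists_index, forall_apply_eq_imp_iff, aeval_coord_apply, Set.mem_ofPred_eq]

end Coordinates

end ZariskiClosure

section Slices

variable {K B : Type*} [Field K] [AddCommGroup B] [Module K B]

-- `p : (polyFun K B)[X]` is read as the function `(x, t) ↦ (sliceAt x p).eval t` on `B × K`
noncomputable def polyFun.sliceAt (x : B) : (polyFun K B)[X] →+* K[X] :=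
  mapRingHom (polyFun.evalAt K x)

namespace polyFun

@[simp]
theorem coeff_sliceAt (x : B) (p : (polyFun K B)[X]) (j : ℕ) :
    (sliceAt x p).coeff j = (p.coeff j : B → K) x := by
  simp [sliceAt]

@[simp]
theorem sliceAt_C (x : B) (c : polyFun K B) : sliceAt x (C c) = C ((c : B → K) x) := by
  simp [sliceAt]

@[simp]
theorem sliceAt_sub (x : B) (p q : (polyFun K B)[X]) :
    sliceAt x (p - q) = sliceAt x p - sliceAt x q := by
  simp [sliceAt]

@[simp]
theorem sliceAt_X (x : B) : sliceAt x (X : (polyFun K B)[X]) = X := by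
  simp [sliceAt]

theorem sliceAt_taylor (x : B) (s : K) (p : (polyFun K B)[X]) :
    sliceAt x (taylor (algebraMap K (polyFun K B) s) p) = taylor s (sliceAt x p) := by
  simp [sliceAt]

theorem sliceAt_map_translate (x a : B) (p : (polyFun K B)[X]) :
    sliceAt x (p.map (translate K a : polyFun K B →+* polyFun K B)) = sliceAt (x + a) p := by
  ext j; simp

theorem degree_sliceAt {x : B} {p : (polyFun K B)[X]} (hx : (p.leadingCoeff : B → K) x ≠ 0) :
    (sliceAt x p).degree = p.degree :=
  degree_map_eq_of_leadingCoeff_ne_zero _ hx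

theorem sliceAt_ne_zero {x : B} {p : (polyFun K B)[X]} (hx : (p.leadingCoeff : B → K) x ≠ 0) :
    sliceAt x p ≠ 0 :=
  fun h ↦ hx (by simpa using congrArg (coeff · p.natDegree) h)

theorem natDegree_sliceAt {x : B} {p : (polyFun K B)[X]} (hx : (p.leadingCoeff : B → K) x ≠ 0) :
    (sliceAt x p).natDegree = p.natDegree :=
  natDegree_map_of_leadingCoeff_ne_zero _ hx

theorem sliceAt_eq_zero_of_mem_zariskiClosure {A : Set B} {p : (polyFun K B)[X]}
    (hp : ∀ j, ∀ a ∈ A, (p.coeff j : B → K) a = 0) {z : B} (hz : z ∈ zariskiClosure K A) :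
    sliceAt z p = 0 := by
  ext j
  simpa using hz _ (p.coeff j).2 (hp j)

theorem exists_eq_eval_sliceAt {f : B × K → K} (hf : f ∈ polyFun K (B × K)) :
    ∃ p : (polyFun K B)[X], ∀ x t, f (x, t) = (sliceAt x p).eval t := by
  induction hf using Algebra.adjoin_induction with
  | mem g hg =>
    let ℓ : B × K →ₗ[K] K := IsLinearMap.mk' g hg
    refine ⟨C ⟨_, linearMap_mem_polyFun (ℓ ∘ₗ LinearMap.inl K B K)⟩ +
      C (algebraMap K _ (g (0, 1))) * X, fun x t ↦ ?_⟩
    have hxt : (x, t) = (x, 0) + t • ((0 : B), (1 : K)) := by simp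
    change ℓ (x, t) = _
    rw [hxt, map_add, map_smul]
    simp only [map_add, map_mul, sliceAt_C, sliceAt_X, eval_add, eval_mul, eval_C, eval_X]
    simp [ℓ, smul_eq_mul, mul_comm]
  | algebraMap r => exact ⟨C (algebraMap K _ r), fun x t ↦ by simp [sliceAt]⟩
  | add f₁ f₂ _ _ h₁ h₂ =>
    obtain ⟨p₁, hp₁⟩ := h₁
    obtain ⟨p₂, hp₂⟩ := h₂
    exact ⟨p₁ + p₂, fun x t ↦ by simp [hp₁, hp₂]⟩
  | mul f₁ f₂ _ _ h₁ h₂ =>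
    obtain ⟨p₁, hp₁⟩ := h₁
    obtain ⟨p₂, hp₂⟩ := h₂
    exact ⟨p₁ * p₂, fun x t ↦ by simp [hp₁, hp₂]⟩

-- The pseudo-remainder of `Q` modulo `P` has coefficients in `polyFun`; times the leading
-- coefficient of `P` it vanishes on `A`, hence on the closure of `A`.
theorem sliceAt_dvd_of_mem_zariskiClosure {A : Set B} {P Q : (polyFun K B)[X]}
    (hA : ∀ x ∈ A, (P.leadingCoeff : B → K) x ≠ 0 → sliceAt x P ∣ sliceAt x Q)
    {z : B} (hz : z ∈ zariskiClosure K A) (hPz : (P.leadingCoeff : B → K) z ≠ 0) :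
    sliceAt z P ∣ sliceAt z Q := by
  have hP : P ≠ 0 := by rintro rfl; simp at hPz
  obtain ⟨N, q, rem, hdiv, hrem⟩ := exists_C_leadingCoeff_pow_mul_eq_mul_add hP Q
  have hslice : ∀ x, C ((P.leadingCoeff : B → K) x) ^ N * sliceAt x Q =
      sliceAt x q * sliceAt x P + sliceAt x rem := fun x ↦ by
    simpa using congrArg (sliceAt x) hdiv
  have hremA : ∀ j, ∀ x ∈ A, ((C P.leadingCoeff * rem).coeff j : B → K) x = 0 := by
    intro j x hx
    by_cases hPx : (P.leadingCoeff : B → K) x = 0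
    · simp [hPx]
    have hdvd : sliceAt x P ∣ sliceAt x rem := by
      rw [eq_sub_of_add_eq' (hslice x).symm]
      exact dvd_sub ((hA x hx hPx).mul_left _) (dvd_mul_left _ _)
    have hrem0 : sliceAt x rem = 0 := eq_zero_of_dvd_of_degree_lt hdvd <|
      (degree_map_le ..).trans_lt (hrem.trans_eq (degree_sliceAt hPx).symm)
    have := congrArg (coeff · j) hrem0
    simp only [coeff_sliceAt, coeff_zero] at this
    simp [coeff_C_mul, this]
  have hremz : sliceAt z rem = 0 := by
    simpa [hPz] using sliceAt_eq_zero_of_mem_zariskiClosure hremA hz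
  have hunit : IsUnit (C ((P.leadingCoeff : B → K) z) ^ N) := (isUnit_C.2 hPz.isUnit).pow N
  rw [← hunit.dvd_mul_left, hslice, hremz, add_zero]
  exact dvd_mul_left _ _

end polyFun

end Slices

section Projection

open polyFun

variable {K B : Type*} [Field K] [AddCommGroup B] [Module K B]

def IsRelation (V : Set (B × K)) (p : (polyFun K B)[X]) : Prop :=
  ∀ w ∈ V, (sliceAt w.1 p).eval w.2 = 0

structure IsMinimalRelation (V : Set (B × K)) (P : (polyFun K B)[X]) : Prop where
  isRelation : IsRelation V P
  exists_leadingCoeff_ne_zero : ∃ x ∈ Prod.fst '' V, (P.leadingCoeff : B → K) x ≠ 0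
  minimal : ∀ q, IsRelation V q → q.natDegree ≤ P.natDegree →
    (∀ x ∈ Prod.fst '' V, (q.coeff P.natDegree : B → K) x = 0) →
    ∀ j, ∀ x ∈ Prod.fst '' V, (q.coeff j : B → K) x = 0

theorem IsRelation.exists_truncation {V : Set (B × K)} {q : (polyFun K B)[X]}
    (hq : IsRelation V q) {j : ℕ} (hj : ∃ x ∈ Prod.fst '' V, (q.coeff j : B → K) x ≠ 0) :
    ∃ i ≤ q.natDegree, (∃ x ∈ Prod.fst '' V, (q.coeff i : B → K) x ≠ 0) ∧
      ∃ P : (polyFun K B)[X], IsRelation V P ∧ P.natDegree ≤ i ∧ P.coeff i = q.coeff i := by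
  classical
  set i := Nat.findGreatest (fun i ↦ ∃ x ∈ Prod.fst '' V, (q.coeff i : B → K) x ≠ 0) q.natDegree
  have hjq : j ≤ q.natDegree := by
    by_contra! h
    obtain ⟨x, -, hx⟩ := hj
    simp [coeff_eq_zero_of_natDegree_lt h] at hx
  have habove : ∀ k, i < k → ∀ x ∈ Prod.fst '' V, (q.coeff k : B → K) x = 0 := by
    intro k hk x hx
    by_cases hkq : k ≤ q.natDegree
    · by_contra hne
      exact Nat.findGreatest_is_greatest hk hkq ⟨x, hx, hne⟩
    · simp [coeff_eq_zero_of_natDegree_lt (not_le.1 hkq)]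
  refine ⟨i, Nat.findGreatest_le _, Nat.findGreatest_spec (P := fun i ↦ ∃ x ∈ Prod.fst '' V,
    (q.coeff i : B → K) x ≠ 0) hjq hj, PowerSeries.trunc (i + 1) q,
    fun w hw ↦ ?_, Nat.lt_succ_iff.1 (PowerSeries.natDegree_trunc_lt _ i), by
      simp [PowerSeries.coeff_trunc]⟩
  rw [← hq w hw]
  congr 1
  ext k
  simp only [coeff_sliceAt, PowerSeries.coeff_trunc, Polynomial.coeff_coe]
  split_ifs with hk
  · rfl
  · exact (habove k (by omega) w.1 ⟨w, hw, rfl⟩).symm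

theorem exists_isMinimalRelation {V : Set (B × K)} {x₀ : B} (hx₀ : x₀ ∈ Prod.fst '' V) {t₀ : K}
    (ht₀ : (x₀, t₀) ∉ zariskiClosure K V) : ∃ P, IsMinimalRelation V P := by
  classical
  obtain ⟨f, hf, hfV, hft₀⟩ := exists_polyFun_of_notMem_zariskiClosure ht₀
  obtain ⟨q, hq⟩ := exists_eq_eval_sliceAt hf
  have hqV : IsRelation V q := fun w hw ↦ by rw [← hq]; exact hfV w hw
  obtain ⟨j, hj⟩ : ∃ j, ∃ x ∈ Prod.fst '' V, (q.coeff j : B → K) x ≠ 0 := by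
    by_contra! h
    have : sliceAt x₀ q = 0 := by ext j; simp [h j x₀ hx₀]
    exact hft₀ (by simp [hq, this])
  have hex : ∃ r, ∃ P : (polyFun K B)[X], IsRelation V P ∧ P.natDegree ≤ r ∧
      ∃ x ∈ Prod.fst '' V, (P.coeff r : B → K) x ≠ 0 := by
    obtain ⟨i, -, hiq, P, hP, hPi, hPq⟩ := hqV.exists_truncation hj
    exact ⟨i, P, hP, hPi, by rwa [hPq]⟩
  obtain ⟨P, hP, hPdeg, hPr⟩ := Nat.find_spec hex
  have hnat : P.natDegree = Nat.find hex := by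
    refine le_antisymm hPdeg (le_natDegree_of_ne_zero fun h ↦ ?_)
    obtain ⟨x, -, hx⟩ := hPr
    rw [h] at hx
    exact hx rfl
  refine ⟨P, hP, by rwa [leadingCoeff, hnat], fun q hq hqdeg hqr j x hx ↦ ?_⟩
  rw [hnat] at hqdeg hqr
  by_contra hne
  obtain ⟨i, hi, hiq, P', hP', hP'i, hP'q⟩ := hq.exists_truncation ⟨x, hx, hne⟩
  have hir : i ≠ Nat.find hex := by
    rintro rfl
    obtain ⟨y, hy, hy'⟩ := hiq
    exact hy' (hqr y hy)
  exact Nat.find_min hex (lt_of_le_of_ne (hi.trans hqdeg) hir) ⟨P', hP', hP'i, by rwa [hP'q]⟩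

namespace IsMinimalRelation

variable {P : (polyFun K B)[X]}

theorem natDegree_pos {V : Set (B × K)} (hP : IsMinimalRelation V P) : 0 < P.natDegree := by
  obtain ⟨x, ⟨w, hw, rfl⟩, hx⟩ := hP.exists_leadingCoeff_ne_zero
  refine Nat.pos_of_ne_zero fun h0 ↦ hx ?_
  have := hP.isRelation w hw
  rw [eq_C_of_natDegree_eq_zero h0, sliceAt_C, eval_C] at this
  rwa [leadingCoeff, h0]

-- comparing `P` with its translate by `a` gives a relation of smaller degree, hence a trivial one
theorem leadingCoeff_mul_eval_sliceAt {V : AddSubgroup (B × K)}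
    (hP : IsMinimalRelation (V : Set (B × K)) P) {a : B × K} (ha : a ∈ V) {x : B}
    (hx : x ∈ zariskiClosure K (Prod.fst '' (V : Set (B × K)))) (t : K) :
    (P.leadingCoeff : B → K) (x + a.1) * (sliceAt x P).eval t =
      (P.leadingCoeff : B → K) x * (sliceAt (x + a.1) P).eval (t + a.2) := by
  set c := P.leadingCoeff
  set g := C (translate K a.1 c) * P -
    C c * taylor (algebraMap K _ a.2) (P.map (translate K a.1 : polyFun K B →+* polyFun K B))
  have hslice : ∀ y, sliceAt y g = C ((c : B → K) (y + a.1)) * sliceAt y P -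
      C ((c : B → K) y) * taylor a.2 (sliceAt (y + a.1) P) := fun y ↦ by
    simp only [g, sliceAt_sub, map_mul, sliceAt_C, sliceAt_taylor, sliceAt_map_translate,
      polyFun.translate_apply]
  have hg : IsRelation V g := fun w hw ↦ by
    have h₂ := hP.isRelation (w + a) (V.add_mem hw ha)
    rw [Prod.fst_add, Prod.snd_add] at h₂
    simp [hslice, taylor_eval, hP.isRelation w hw, h₂]
  have hdeg : g.natDegree ≤ P.natDegree := by
    refine (natDegree_sub_le _ _).trans (max_le (natDegree_C_mul_le _ _)
      ((natDegree_C_mul_le _ _).trans ?_))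
    rw [natDegree_taylor]
    exact natDegree_map_le
  have htop : g.coeff P.natDegree = 0 := by
    rw [coeff_sub, coeff_C_mul, coeff_C_mul, coeff_taylor_of_natDegree_le natDegree_map_le,
      coeff_map, coeff_natDegree]
    exact sub_eq_zero.2 (mul_comm _ _)
  have hg0 := sliceAt_eq_zero_of_mem_zariskiClosure (hP.minimal g hg hdeg (by simp [htop])) hx
  rw [hslice] at hg0
  simpa [taylor_eval, sub_eq_zero] using congrArg (eval t) hg0

theorem exists_root_add_mem {V : AddSubgroup (B × K)} (hP : IsMinimalRelation (V : Set (B × K)) P)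
    {u : B} {s : K} (hus : (u, s) ∈ V) (hu : (P.leadingCoeff : B → K) u ≠ 0) {w : B × K}
    (hw : w ∈ V) (hw₁ : (P.leadingCoeff : B → K) w.1 ≠ 0) {t : K} (ht : (sliceAt w.1 P).IsRoot t) :
    ∃ ρ ∈ (sliceAt u P).roots, (w.1, t) + ((0 : B), s - ρ) ∈ V := by
  have hid := hP.leadingCoeff_mul_eval_sliceAt (V.sub_mem hus hw)
    (subset_zariskiClosure _ ⟨w, hw, rfl⟩) t
  simp only [Prod.fst_sub, Prod.snd_sub, add_sub_cancel, ht.eq_zero, mul_zero] at hid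
  refine ⟨t + (s - w.2), (mem_roots (sliceAt_ne_zero hu)).2
    ((mul_eq_zero.1 hid.symm).resolve_left hw₁), ?_⟩
  convert hw using 1
  ext
  · simp
  · simp only [Prod.snd_add]; ring

theorem mem_fst_image [IsAlgClosed K] {V : AddSubgroup (B × K)}
    (hV : IsZariskiClosed K (V : Set (B × K))) (hP : IsMinimalRelation (V : Set (B × K)) P)
    {z : B} (hz : z ∈ zariskiClosure K (Prod.fst '' (V : Set (B × K))))
    (hPz : (P.leadingCoeff : B → K) z ≠ 0) : z ∈ Prod.fst '' (V : Set (B × K)) := by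
  classical
  by_contra hzV
  obtain ⟨_, ⟨⟨u, s⟩, hus, rfl⟩, hu⟩ := hP.exists_leadingCoeff_ne_zero
  -- finitely many translates of `V` contain every root of `P` over `fst '' V`, but none over `z`
  set U : Set (B × K) := ⋃ ρ ∈ (sliceAt u P).roots.toFinset,
    (fun w ↦ LinearMap.id (R := K) (M := B × K) w + ((0 : B), s - ρ)) ⁻¹' V
  have hU : IsZariskiClosed K U := (zariskiClosure_biUnion_subset _ _).trans
    (Set.iUnion₂_mono fun _ _ ↦ hV.preimage_affine _ _)
  have hrootsU : ∀ x ∈ Prod.fst '' (V : Set (B × K)), (P.leadingCoeff : B → K) x ≠ 0 →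
      ∀ t, (sliceAt x P).IsRoot t → (x, t) ∈ U := by
    rintro _ ⟨w, hw, rfl⟩ hw₁ t ht
    obtain ⟨ρ, hρ, hmem⟩ := hP.exists_root_add_mem hus hu hw hw₁ ht
    exact Set.mem_biUnion (Multiset.mem_toFinset.2 hρ) hmem
  obtain ⟨t₁, ht₁⟩ := IsAlgClosed.exists_root (sliceAt z P) <| by
    rw [degree_sliceAt hPz, degree_eq_natDegree (fun h ↦ by simp [h] at hPz)]
    exact_mod_cast hP.natDegree_pos.ne'
  have hzU : (z, t₁) ∉ zariskiClosure K U := fun h ↦ by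
    obtain ⟨ρ, -, hρ⟩ := Set.mem_iUnion₂.1 (hU h)
    exact hzV ⟨_, hρ, by simp⟩
  obtain ⟨f, hf, hfU, hfz⟩ := exists_polyFun_of_notMem_zariskiClosure hzU
  obtain ⟨q, hq⟩ := exists_eq_eval_sliceAt hf
  have hdvd : sliceAt z P ∣ sliceAt z (q ^ P.natDegree) := by
    refine sliceAt_dvd_of_mem_zariskiClosure (fun x hx hPx ↦ ?_) hz hPz
    rw [map_pow, ← natDegree_sliceAt hPx]
    exact dvd_pow_natDegree_of_forall_isRoot (sliceAt_ne_zero hPx) fun t ht ↦ by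
      rw [IsRoot, ← hq]
      exact hfU _ (hrootsU x hx hPx t ht)
  apply hfz
  have := eval_eq_zero_of_dvd_of_eval_eq_zero hdvd ht₁
  rwa [map_pow, eval_pow, pow_eq_zero_iff hP.natDegree_pos.ne', ← hq] at this

end IsMinimalRelation

-- a subgroup containing a nonempty open subset of its closure is closed
theorem isZariskiClosed_of_forall_mem_of_ne_zero (S : AddSubgroup B) {c : B → K}
    (hc : c ∈ polyFun K B) (hcS : ∃ x ∈ S, c x ≠ 0)
    (h : ∀ z ∈ zariskiClosure K (S : Set B), c z ≠ 0 → z ∈ S) : IsZariskiClosed K (S : Set B) := by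
  intro y hy
  replace hy : y ∈ S.zariskiClosure K := hy
  obtain ⟨x, hxS, hx⟩ := hcS
  obtain ⟨v, hvS, hv⟩ : ∃ v ∈ S, c (y - v) ≠ 0 := by
    by_contra! hvan
    have hyx : y - x ∈ S.zariskiClosure K := sub_mem hy (subset_zariskiClosure _ hxS)
    have hvan' := hyx _ (comp_affine_mem_polyFun hc (-LinearMap.id) y) fun u hu ↦ by
      simpa [neg_add_eq_sub] using hvan u hu
    exact hx (by simpa using hvan')
  simpa using S.add_mem (h _ (sub_mem hy (subset_zariskiClosure _ hvS)) hv) hvS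

theorem isZariskiClosed_fst_image_of_forall_mem {V : AddSubgroup (B × K)}
    (hV : IsZariskiClosed K (V : Set (B × K))) (hline : ∀ t : K, ((0 : B), t) ∈ V) :
    IsZariskiClosed K (Prod.fst '' (V : Set (B × K))) := by
  have : Prod.fst '' (V : Set (B × K)) = (fun x ↦ LinearMap.inl K B K x + 0) ⁻¹' V := by
    ext x
    constructor
    · rintro ⟨⟨x, t⟩, h, rfl⟩
      simpa using V.sub_mem h (hline t)
    · exact fun h ↦ ⟨(x, 0), by simpa using h, rfl⟩
  rw [this]
  exact hV.preimage_affine _ _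

theorem isZariskiClosed_fst_image [IsAlgClosed K] {V : AddSubgroup (B × K)}
    (hV : IsZariskiClosed K (V : Set (B × K))) :
    IsZariskiClosed K (Prod.fst '' (V : Set (B × K))) := by
  by_cases hline : ∀ t : K, ((0 : B), t) ∈ V
  · exact isZariskiClosed_fst_image_of_forall_mem hV hline
  obtain ⟨t₀, ht₀⟩ := not_forall.1 hline
  obtain ⟨P, hP⟩ := exists_isMinimalRelation ⟨0, V.zero_mem, rfl⟩ fun h ↦ ht₀ (hV h)
  have hS : ((V.map (AddMonoidHom.fst B K) : AddSubgroup B) : Set B) =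
      Prod.fst '' (V : Set (B × K)) :=
    AddSubgroup.coe_map _ _
  rw [← hS]
  refine isZariskiClosed_of_forall_mem_of_ne_zero _ P.leadingCoeff.2 ?_ fun z hz hPz ↦ ?_
  · simpa only [← SetLike.mem_coe, hS] using hP.exists_leadingCoeff_ne_zero
  · rw [hS] at hz
    rw [← SetLike.mem_coe, hS]
    exact hP.mem_fst_image hV hz hPz

end Projection

section LinearImage

variable {K B B₂ : Type*} [Field K] [IsAlgClosed K] [AddCommGroup B] [Module K B]
  [AddCommGroup B₂] [Module K B₂]

-- split off a line `K ∙ v` of `ker ψ`: then `ψ(V)` is the image of `fst(V)` under `ψ` restricted to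
-- a complement of the line, which has smaller dimension
theorem isZariskiClosed_image [FiniteDimensional K B] (ψ : B →ₗ[K] B₂) {V : AddSubgroup B}
    (hV : IsZariskiClosed K (V : Set B)) : IsZariskiClosed K (ψ '' V) := by
  induction hn : Module.finrank K B using Nat.strong_induction_on generalizing B with
  | _ n ih =>
  by_cases hker : LinearMap.ker ψ = ⊥
  · exact hV.image_of_injective (LinearMap.ker_eq_bot.1 hker)
  obtain ⟨v, hv, hv0⟩ := (Submodule.ne_bot_iff _).1 hker
  obtain ⟨W, hW⟩ := Submodule.exists_isCompl (K ∙ v)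
  let E : (W × K) ≃ₗ[K] B := ((LinearEquiv.refl K W).prodCongr
    (LinearEquiv.toSpanNonzeroSingleton K B v hv0)).trans (Submodule.prodEquivOfIsCompl W _ hW.symm)
  have hψE : ∀ p, ψ (E p) = ψ p.1 := fun p ↦ by
    simp [E, Submodule.coe_prodEquivOfIsCompl', LinearMap.mem_ker.1 hv]
  let V' : AddSubgroup (W × K) := V.comap E.toAddMonoidHom
  have hV' : IsZariskiClosed K (V' : Set (W × K)) := by
    have := hV.preimage_affine E.toLinearMap 0
    simp only [add_zero] at this
    exact this
  have himage : ψ '' V = (ψ ∘ₗ W.subtype) '' (V'.map (AddMonoidHom.fst W K) : Set W) := by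
    have hcomp : (fun p ↦ (ψ ∘ₗ W.subtype) (AddMonoidHom.fst W K p)) = ψ ∘ E :=
      funext fun p ↦ (hψE p).symm
    rw [AddSubgroup.coe_map, Set.image_image, hcomp, Set.image_comp, AddSubgroup.coe_comap]
    exact congrArg _ (Set.image_preimage_eq _ E.surjective).symm
  have hdim : Module.finrank K W < n := by
    have := Submodule.finrank_add_eq_of_isCompl hW
    rw [finrank_span_singleton hv0] at this
    omega
  rw [himage]
  exact ih _ hdim (ψ ∘ₗ W.subtype) (by simpa using isZariskiClosed_fst_image hV') rfl

theorem image_zariskiClosure [FiniteDimensional K B] (ψ : B →ₗ[K] B₂) (G : AddSubgroup B) :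
    ψ '' zariskiClosure K (G : Set B) = zariskiClosure K (ψ '' G) :=
  (image_zariskiClosure_subset ψ _).antisymm <|
    (zariskiClosure_mono (Set.image_mono (subset_zariskiClosure _))).trans
      (isZariskiClosed_image ψ (V := G.zariskiClosure K) (isZariskiClosed_zariskiClosure _))

end LinearImage

theorem stmt_4_general {K F B B' : Type*} [Field K] [IsAlgClosed K] [Field F]
    [AddCommGroup B] [Module K B] [Module F B]
    [AddCommGroup B'] [Module K B']
    {n n' : ℕ} (β : Module.Basis (Fin n) K B) (β' : Module.Basis (Fin n') K B')
    (ψ : B →ₗ[K] B') (A : Set B)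
    (h0 : (0 : B) ∈ A)
    (hadd : ∀ x ∈ A, ∀ y ∈ A, x + y ∈ A)
    (hsmul : ∀ (c : F), ∀ x ∈ A, c • x ∈ A) :
    ψ '' (zcl β A) = zcl β' (ψ '' A) ∧
      (zcl β A = A → zcl β' (ψ '' A) = ψ '' A) := by
  have := Module.Finite.of_basis β
  let G : AddSubgroup B :=
    { carrier := A
      zero_mem' := h0
      add_mem' := fun {x y} hx hy ↦ hadd x hx y hy
      neg_mem' := fun {x} hx ↦ by simpa using hsmul (-1) x hx }
  have hmain : ψ '' zcl β A = zcl β' (ψ '' A) := by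
    rw [zcl_eq_zariskiClosure, zcl_eq_zariskiClosure]
    exact image_zariskiClosure ψ G
  exact ⟨hmain, fun hA ↦ by rw [← hmain, hA]⟩

/-- for a `K`-linear map `ψ : B → B'` and an `F`-subspace `A` of `B`,
`ψ(cl(A)) = cl(ψ(A))`; in particular, the image under `ψ` of a Zariski-closed `F`-subspace
of `B` is Zariski-closed in `B'`. -/
theorem stmt_4 {K F B B' : Type*} [Field K] [IsAlgClosed K] [Field F] [Algebra F K]
    [AddCommGroup B] [Module K B] [Module F B] [IsScalarTower F K B]
    [AddCommGroup B'] [Module K B']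
    {n n' : ℕ} (β : Module.Basis (Fin n) K B) (β' : Module.Basis (Fin n') K B')
    (ψ : B →ₗ[K] B') (A : Set B)
    (h0 : (0 : B) ∈ A)
    (hadd : ∀ x ∈ A, ∀ y ∈ A, x + y ∈ A)
    (hsmul : ∀ (c : F), ∀ x ∈ A, c • x ∈ A) :
    ψ '' (zcl β A) = zcl β' (ψ '' A) ∧
      (zcl β A = A → zcl β' (ψ '' A) = ψ '' A) :=
  stmt_4_general β β' ψ A h0 hadd hsmul
end

section
/- Let A be a submonoid of K^n under coordinatewise multiplication (with identity element (1,…,1)) which is Zariski-closed. Then the ideal poly(A) of polynomial relations of A is generated by polynomial relations of the following two forms: products of variables λ_{i₁}⋯λ_{i_t}, and differences of monomials λ₁^{i₁}⋯λ_n^{i_n} − λ₁^{j₁}⋯λ_n^{j_n} (with nonnegative integer exponents) that vanish on A. -/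
/-!
The evaluations of the monomials `λ^d` on `A` are characters of the monoid `A`, so by Artin's
linear independence of characters a polynomial relation of `A` has, within each class of
monomials inducing the same character, coefficients summing to zero. Such a polynomial is a linear
combination of differences `λ^d - λ^e` of monomials in the same class, and these vanish on `A`.
-/

/-- The ideal `poly(A)` of polynomial relations of a subset `A ⊆ K^n`. -/
def polyIdeal {K : Type*} [Field K] {n : ℕ} (A : Set (Fin n → K)) :
    Ideal (MvPolynomial (Fin n) K) where
  carrier := {f | ∀ a ∈ A, MvPolynomial.eval a f = 0}
  zero_mem' := by intro a _; simp
  add_mem' := by intro f g hf hg a ha; simp [hf a ha, hg a ha]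
  smul_mem' := by intro c f hf a ha; simp [hf a ha]

open MvPolynomial Finset

section Fibers

variable {R V ι β : Type*} [Ring R] [AddCommGroup V] [Module R V] [DecidableEq β]

theorem LinearIndependent.sum_fiber_eq_zero {w : β → V} (hw : LinearIndependent R w)
    {φ : ι → β} {s : Finset ι} {c : ι → R} (h : ∑ i ∈ s, c i • w (φ i) = 0) (b : β) :
    ∑ i ∈ s with φ i = b, c i = 0 := by
  have hfib : ∑ b ∈ s.image φ, (∑ i ∈ s with φ i = b, c i) • w b = 0 := by
    rw [← h, ← sum_fiberwise_of_maps_to fun i hi => mem_image_of_mem φ hi]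
    refine sum_congr rfl fun b _ => ?_
    rw [sum_smul]
    exact sum_congr rfl fun i hi => by rw [(mem_filter.mp hi).2]
  by_cases hb : b ∈ s.image φ
  · exact linearIndependent_iff'.mp hw _ _ hfib b hb
  · refine sum_eq_zero fun i hi => absurd ?_ hb
    exact mem_image.mpr ⟨i, (mem_filter.mp hi).1, (mem_filter.mp hi).2⟩

theorem sum_smul_mem_span_sub_of_sum_fiber_eq_zero [Nonempty ι] (v : ι → V) (φ : ι → β)
    {s : Finset ι} {c : ι → R} (h : ∀ b, ∑ i ∈ s with φ i = b, c i = 0) :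
    ∑ i ∈ s, c i • v i ∈ Submodule.span R {x | ∃ i j, φ i = φ j ∧ x = v i - v j} := by
  -- `r ∘ φ` sends every index to one fixed representative of its fiber.
  set r : β → ι := Function.invFun φ
  have hrep : ∑ i ∈ s, c i • v (r (φ i)) = 0 := by
    rw [← sum_fiberwise_of_maps_to fun i hi => mem_image_of_mem φ hi]
    refine sum_eq_zero fun b _ => ?_
    rw [sum_congr rfl fun i hi => by rw [(mem_filter.mp hi).2], ← sum_smul, h b, zero_smul]
  have hsplit : ∑ i ∈ s, c i • v i = ∑ i ∈ s, c i • (v i - v (r (φ i))) := by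
    simp only [smul_sub, sum_sub_distrib, hrep, sub_zero]
  rw [hsplit]
  refine Submodule.sum_mem _ fun i _ => Submodule.smul_mem _ _ (Submodule.subset_span ?_)
  exact ⟨i, r (φ i), (Function.invFun_eq ⟨i, rfl⟩).symm, rfl⟩

end Fibers

section Characters

variable {σ : Type*}

noncomputable def monomialChar {R : Type*} [CommSemiring R] (M : Submonoid (σ → R))
    (d : σ →₀ ℕ) : M →* R where
  toFun x := eval (x : σ → R) (monomial d 1)
  map_one' := by simp [eval_monomial]
  map_mul' x y := by simp [eval_monomial, Finsupp.prod, mul_pow, prod_mul_distrib]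

theorem mem_span_vanishing_binomials {K : Type*} [Field K] (M : Submonoid (σ → K))
    {f : MvPolynomial σ K} (hf : ∀ x ∈ M, eval x f = 0) :
    f ∈ Submodule.span K
      {g | (∃ d e, g = monomial d 1 - monomial e 1) ∧ ∀ x ∈ M, eval x g = 0} := by
  classical
  have hsum : f = ∑ d ∈ f.support, coeff d f • monomial d 1 := by
    conv_lhs => rw [f.as_sum]
    simp_rw [smul_monomial, smul_eq_mul, mul_one]
  have hchar : ∑ d ∈ f.support, coeff d f • (monomialChar M d : M → K) = 0 := by
    funext x
    have hx := hf x x.2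
    rw [hsum] at hx
    simpa [monomialChar] using hx
  rw [hsum]
  refine Submodule.span_mono ?_ (sum_smul_mem_span_sub_of_sum_fiber_eq_zero _ (monomialChar M)
    ((linearIndependent_monoidHom M K).sum_fiber_eq_zero hchar))
  rintro _ ⟨d, e, hde, rfl⟩
  refine ⟨⟨d, e, rfl⟩, fun x hx => ?_⟩
  simpa [monomialChar, sub_eq_zero] using DFunLike.congr_fun hde ⟨x, hx⟩

end Characters

theorem monomial_one_eq_prod_X_pow {σ R : Type*} [CommSemiring R] [Fintype σ] (d : σ →₀ ℕ) :
    monomial d (1 : R) = ∏ i, X i ^ d i := by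
  rw [monomial_eq, C_1, one_mul, Finsupp.prod_fintype _ _ fun _ => pow_zero _]

theorem stmt_17_general {K : Type*} [Field K] {n : ℕ} (A : Set (Fin n → K))
    (hone : (1 : Fin n → K) ∈ A)
    (hmul : ∀ x ∈ A, ∀ y ∈ A, x * y ∈ A) :
    Ideal.span {f | f ∈ polyIdeal A ∧
        ((∃ l : List (Fin n), l ≠ [] ∧ f = (l.map MvPolynomial.X).prod) ∨
          (∃ d e : Fin n → ℕ,
            f = (∏ i : Fin n, MvPolynomial.X i ^ d i)
                  - ∏ i : Fin n, MvPolynomial.X i ^ e i))}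
      = polyIdeal A := by
  refine le_antisymm (Ideal.span_le.mpr fun f hf => hf.1) fun f hf => ?_
  let M : Submonoid (Fin n → K) :=
    { carrier := A, one_mem' := hone, mul_mem' := fun {x y} hx hy => hmul x hx y hy }
  refine (Submodule.span_le (p := (Ideal.span _).restrictScalars K)).mpr ?_
    (mem_span_vanishing_binomials M hf)
  rintro _ ⟨⟨d, e, rfl⟩, hvan⟩
  refine Ideal.subset_span ⟨hvan, Or.inr ⟨d, e, ?_⟩⟩
  rw [monomial_one_eq_prod_X_pow, monomial_one_eq_prod_X_pow]

/-- for a Zariski-closed submonoid `A` of `K^n` under coordinatewise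
multiplication (with identity `(1,…,1)`), the ideal `poly(A)` is generated by the
relations of the forms `λ_{i₁}⋯λ_{i_t}` and `λ₁^{i₁}⋯λ_n^{i_n} − λ₁^{j₁}⋯λ_n^{j_n}`
(nonnegative integer exponents) that vanish on `A`. -/
theorem stmt_17 {K : Type*} [Field K] [IsAlgClosed K] {n : ℕ} (A : Set (Fin n → K))
    (hone : (1 : Fin n → K) ∈ A)
    (hmul : ∀ x ∈ A, ∀ y ∈ A, x * y ∈ A)
    (hcl : ∀ x : Fin n → K, (∀ f ∈ polyIdeal A, MvPolynomial.eval x f = 0) → x ∈ A) :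
    Ideal.span {f | f ∈ polyIdeal A ∧
        ((∃ l : List (Fin n), l ≠ [] ∧ f = (l.map MvPolynomial.X).prod) ∨
          (∃ d e : Fin n → ℕ,
            f = (∏ i : Fin n, MvPolynomial.X i ^ d i)
                  - ∏ i : Fin n, MvPolynomial.X i ^ e i))}
      = polyIdeal A :=
  stmt_17_general A hone hmul
end
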